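/- The spatial Cartan coefficients L^2_{jk} = (g^{2s}/2)·(δg_{js}/δx^k + δg_{ks}/δx^j − δg_{jk}/δx^s) of the 2D-monolayer metric satisfy L^2_{11} = 3φ̇/(2 r ṙ), L^2_{12} = L^2_{21} = 1/r, and L^2_{22} = 0, at every point with r > 0, ṙ ≠ 0 and g₁₁ ≠ 0. -/

import Mathlib

/-- The fundamental metrical d-tensor g_{ij} of the 2D-monolayer Lagrangian. -/
noncomputable def gE (m p V : ℝ) (i j : Fin 2) (t r φ rd φd : ℝ) : ℝ :=
  if i = 0 ∧ j = 0 then (m - 2 * p * r ^ 5 * |V| * Real.exp (2 * |V| * t / r) * (rd ^ 3)⁻¹) / 2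
  else if i = 1 ∧ j = 1 then m * r ^ 2 / 2 else 0

/-- The inverse fundamental metric g^{ij}. -/
noncomputable def gI (m p V : ℝ) (i j : Fin 2) (t r φ rd φd : ℝ) : ℝ :=
  if i = 0 ∧ j = 0 then 2 / (m - 2 * p * r ^ 5 * |V| * Real.exp (2 * |V| * t / r) * (rd ^ 3)⁻¹)
  else if i = 1 ∧ j = 1 then 2 / (m * r ^ 2) else 0

/-- The canonical nonlinear connection components N^{(q)}_{(1)k}. -/
noncomputable def NN (m p V : ℝ) (𝒰 : ℝ → ℝ → ℝ) (q k : Fin 2) (t r φ rd φd : ℝ) : ℝ :=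
  if q = 0 then
    if k = 0 then
      -|V| / (2 * r) + (2 * |V| * t / r ^ 2 - 5 / r) * rd - 𝒰 t r * rd ^ 2
        + 3 * m * Real.exp (-(2 * |V| * t) / r) / (4 * p * |V| * r ^ 4) * rd ^ 2 * φd ^ 2
    else m * Real.exp (-(2 * |V| * t) / r) / (2 * p * |V| * r ^ 4) * rd ^ 3 * φd
  else if k = 0 then φd / r else rd / r

/-- Partial derivative ∂F/∂x^k, with (x¹,x²) = (r,φ). -/
noncomputable def dx (k : Fin 2) (F : ℝ → ℝ → ℝ → ℝ → ℝ → ℝ) (t r φ rd φd : ℝ) : ℝ :=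
  if k = 0 then deriv (fun a => F t a φ rd φd) r else deriv (fun a => F t r a rd φd) φ

/-- Partial derivative ∂F/∂y^k, with (y¹,y²) = (ṙ,φ̇). -/
noncomputable def dy (k : Fin 2) (F : ℝ → ℝ → ℝ → ℝ → ℝ → ℝ) (t r φ rd φd : ℝ) : ℝ :=
  if k = 0 then deriv (fun a => F t r φ a φd) rd else deriv (fun a => F t r φ rd a) φd

/-- Horizontal derivative δF/δx^k = ∂F/∂x^k − N^{(q)}_{(1)k}·∂F/∂y^q. -/
noncomputable def del (m p V : ℝ) (𝒰 : ℝ → ℝ → ℝ) (k : Fin 2)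
    (F : ℝ → ℝ → ℝ → ℝ → ℝ → ℝ) (t r φ rd φd : ℝ) : ℝ :=
  dx k F t r φ rd φd - ∑ q : Fin 2, NN m p V 𝒰 q k t r φ rd φd * dy q F t r φ rd φd

/-- Temporal Cartan coefficients G^k_{j1} = (g^{ks}/2)·∂g_{sj}/∂t. -/
noncomputable def Gtime (m p V : ℝ) (k j : Fin 2) (t r φ rd φd : ℝ) : ℝ :=
  ∑ s : Fin 2, gI m p V k s t r φ rd φd / 2 * deriv (fun a => gE m p V s j a r φ rd φd) t

/-- Vertical Cartan coefficients C^{i(1)}_{j(k)} = (g^{is}/2)·∂g_{js}/∂y^k. -/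
noncomputable def Cv (m p V : ℝ) (i j k : Fin 2) (t r φ rd φd : ℝ) : ℝ :=
  ∑ s : Fin 2, gI m p V i s t r φ rd φd / 2 * dy k (gE m p V j s) t r φ rd φd

/-- Spatial Cartan coefficients
L^i_{jk} = (g^{is}/2)·(δg_{js}/δx^k + δg_{ks}/δx^j − δg_{jk}/δx^s). -/
noncomputable def Lc (m p V : ℝ) (𝒰 : ℝ → ℝ → ℝ) (i j k : Fin 2) (t r φ rd φd : ℝ) : ℝ :=
  ∑ s : Fin 2, gI m p V i s t r φ rd φd / 2 *
    (del m p V 𝒰 k (gE m p V j s) t r φ rd φd + del m p V 𝒰 j (gE m p V k s) t r φ rd φd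
      - del m p V 𝒰 s (gE m p V j k) t r φ rd φd)

set_option maxHeartbeats 2000000

/-- the spatial Cartan coefficients L^2_{jk} of the 2D-monolayer metric. -/
theorem stmt9 (m p V : ℝ) (hm : 0 < m) (hp : 0 < p) (hV : V ≠ 0)
    (𝒰 : ℝ → ℝ → ℝ) (h𝒰 : ContDiff ℝ 1 (Function.uncurry 𝒰))
    (t r φ rd φd : ℝ) (hr : 0 < r) (hrd : rd ≠ 0)
    (hg11 : (m - 2 * p * r ^ 5 * |V| * Real.exp (2 * |V| * t / r) * (rd ^ 3)⁻¹) / 2 ≠ 0) :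
    Lc m p V 𝒰 1 0 0 t r φ rd φd = 3 * φd / (2 * r * rd)
      ∧ Lc m p V 𝒰 1 0 1 t r φ rd φd = 1 / r
      ∧ Lc m p V 𝒰 1 1 0 t r φ rd φd = 1 / r
      ∧ Lc m p V 𝒰 1 1 1 t r φ rd φd = 0 := by
  have hVabs : |V| ≠ 0 := abs_ne_zero.mpr hV
  have hder : deriv (fun x : ℝ =>
      m - 2 * p * r ^ 5 * |V| * Real.exp (2 * |V| * t / r) * (x ^ 3)⁻¹) rd
      = 2 * p * r ^ 5 * |V| * Real.exp (2 * |V| * t / r) * (3 * rd ^ 2 / (rd ^ 3) ^ 2) := by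
    have h1 : HasDerivAt (fun x : ℝ => (x ^ 3)⁻¹)
        (-(↑3 * rd ^ (3 - 1)) / (rd ^ 3) ^ 2) rd :=
      (hasDerivAt_pow 3 rd).inv (pow_ne_zero 3 hrd)
    have h2 := ((h1.const_mul
      (2 * p * r ^ 5 * |V| * Real.exp (2 * |V| * t / r))).const_sub m)
    rw [h2.deriv]
    push_cast
    ring
  have hneg : Real.exp (-(2 * |V| * t) / r) = (Real.exp (2 * |V| * t / r))⁻¹ := by
    rw [neg_div, Real.exp_neg]
  refine ⟨?_, ?_, ?_, ?_⟩ <;>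
    simp only [Lc, del, NN, gI, gE, dx, dy, Fin.sum_univ_two] <;> norm_num
  · have h1 : HasDerivAt (fun x : ℝ => (x ^ 3)⁻¹)
        (-(↑3 * rd ^ (3 - 1)) / (rd ^ 3) ^ 2) rd :=
      (hasDerivAt_pow 3 rd).inv (pow_ne_zero 3 hrd)
    rw [h1.deriv, hneg]
    push_cast
    have hE := Real.exp_ne_zero (2 * |V| * t / r)
    field_simp
  · field_simp
  · field_simp
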